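/- Fix p ≥ 1 and let {E_i}_{i=1}^N be an arrangement of linear subspaces of ℝ^n such that for all 1 ≤ i ≤ N − 3 the collection S_i := {E_j ∩ E_i}_{j>i} has the p-extension property in E_i. Suppose given alternating p-forms R_{ij} ∈ ⋀^p(E_i ∩ E_j)^* for all i < j satisfying the cocycle condition: for all i < j < k, the restrictions to ⋀^p(E_i ∩ E_j ∩ E_k) satisfy R_{ij} − R_{ik} + R_{jk} = 0. Then there exist L_i ∈ ⋀^p E_i^* for i = 1, …, N such that R_{ij} equals the restriction of L_j − L_i to ⋀^p(E_i ∩ E_j) for all i < j. -/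

import Mathlib

open Module Submodule

/-- A family of subspaces of `V` has the *`p`-extension property* if every compatible family of
alternating `p`-forms on the subspaces (i.e. the forms agree after restriction to the pairwise
intersections) extends to an alternating `p`-form on all of `V`. -/
def HasExtensionProperty (p : ℕ) {V : Type*} [AddCommGroup V] [Module ℝ V]
    {ι : Type*} (E : ι → Submodule ℝ V) : Prop :=
  ∀ ω : (i : ι) → AlternatingMap ℝ ↥(E i) ℝ (Fin p),
    (∀ i j, (ω i).compLinearMap (Submodule.inclusion (inf_le_left : E i ⊓ E j ≤ E i)) =
      (ω j).compLinearMap (Submodule.inclusion (inf_le_right : E i ⊓ E j ≤ E j))) →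
    ∃ Ω : AlternatingMap ℝ V ℝ (Fin p),
      ∀ i, Ω.compLinearMap (E i).subtype = ω i

section aux



variable {V : Type*} [AddCommGroup V] [Module ℝ V] {p : ℕ}

/-- Evaluate an alternating form on a subspace at a tuple of ambient vectors. -/
def evalv {S : Submodule ℝ V} (ω : AlternatingMap ℝ ↥S ℝ (Fin p))
    (w : Fin p → V) (h : ∀ i, w i ∈ S) : ℝ :=
  ω fun i => ⟨w i, h i⟩

theorem evalv_congr {S : Submodule ℝ V} (ω : AlternatingMap ℝ ↥S ℝ (Fin p))
    {w w' : Fin p → V} (h : ∀ i, w i ∈ S) (h' : ∀ i, w' i ∈ S) (hw : w = w') :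
    evalv ω w h = evalv ω w' h' := by subst hw; rfl

theorem exists_compl_within (D A : Submodule ℝ V) (h : D ≤ A) :
    ∃ A', A' ≤ A ∧ Disjoint D A' ∧ D ⊔ A' = A := by
  obtain ⟨q, hq⟩ := Submodule.exists_isCompl (D.comap A.subtype)
  have hD : (D.comap A.subtype).map A.subtype = D := by
    rw [Submodule.map_comap_subtype, inf_eq_right.mpr h]
  refine ⟨q.map A.subtype, Submodule.map_subtype_le _ _, ?_, ?_⟩
  · rw [disjoint_iff, ← hD, ← Submodule.map_inf _ (Submodule.injective_subtype A),
      disjoint_iff.mp hq.disjoint, Submodule.map_bot]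
  · rw [← hD, ← Submodule.map_sup, hq.codisjoint.eq_top, Submodule.map_top,
      Submodule.range_subtype]


variable {V : Type*} [AddCommGroup V] [Module ℝ V] {p : ℕ}

theorem exists_extension_pair (A B : Submodule ℝ V)
    (ωA : AlternatingMap ℝ ↥A ℝ (Fin p)) (ωB : AlternatingMap ℝ ↥B ℝ (Fin p))
    (hcompat : ωA.compLinearMap (Submodule.inclusion (inf_le_left : A ⊓ B ≤ A)) =
        ωB.compLinearMap (Submodule.inclusion (inf_le_right : A ⊓ B ≤ B))) :
    ∃ Ω : AlternatingMap ℝ V ℝ (Fin p),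
      Ω.compLinearMap A.subtype = ωA ∧ Ω.compLinearMap B.subtype = ωB := by
  obtain ⟨A', hA'le, hA'disj, hA'sup⟩ :=
    (by
      obtain ⟨q, hq⟩ := Submodule.exists_isCompl ((A ⊓ B).comap A.subtype)
      have hD : ((A ⊓ B).comap A.subtype).map A.subtype = A ⊓ B := by
        rw [Submodule.map_comap_subtype, inf_eq_right.mpr (inf_le_left : A ⊓ B ≤ A)]
      refine ⟨q.map A.subtype, Submodule.map_subtype_le _ _, ?_, ?_⟩
      · rw [disjoint_iff, ← hD, ← Submodule.map_inf _ (Submodule.injective_subtype A),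
          disjoint_iff.mp hq.disjoint, Submodule.map_bot]
      · rw [← hD, ← Submodule.map_sup, hq.codisjoint.eq_top, Submodule.map_top,
          Submodule.range_subtype] :
      ∃ A', A' ≤ A ∧ Disjoint (A ⊓ B) A' ∧ (A ⊓ B) ⊔ A' = A)
  obtain ⟨B', hB'le, hB'disj, hB'sup⟩ :=
    (by
      obtain ⟨q, hq⟩ := Submodule.exists_isCompl ((A ⊓ B).comap B.subtype)
      have hD : ((A ⊓ B).comap B.subtype).map B.subtype = A ⊓ B := by
        rw [Submodule.map_comap_subtype, inf_eq_right.mpr (inf_le_right : A ⊓ B ≤ B)]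
      refine ⟨q.map B.subtype, Submodule.map_subtype_le _ _, ?_, ?_⟩
      · rw [disjoint_iff, ← hD, ← Submodule.map_inf _ (Submodule.injective_subtype B),
          disjoint_iff.mp hq.disjoint, Submodule.map_bot]
      · rw [← hD, ← Submodule.map_sup, hq.codisjoint.eq_top, Submodule.map_top,
          Submodule.range_subtype] :
      ∃ B', B' ≤ B ∧ Disjoint (A ⊓ B) B' ∧ (A ⊓ B) ⊔ B' = B)
  obtain ⟨C, hC⟩ := Submodule.exists_isCompl (A ⊔ B)
  have hBle : B ≤ A ⊔ B' := by
    rw [← hB'sup]; exact sup_le (le_trans inf_le_left le_sup_left) le_sup_right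
  have hAle : A ≤ B ⊔ A' := by
    rw [← hA'sup]; exact sup_le (le_trans inf_le_right le_sup_left) le_sup_right
  have h1 : IsCompl A (B' ⊔ C) := by
    constructor
    · rw [Submodule.disjoint_def]
      intro x hxA hx
      rcases Submodule.mem_sup.mp hx with ⟨b', hb', c, hc, rfl⟩
      have hcAB : c ∈ A ⊔ B := by
        have : (b' + c) - b' ∈ A ⊔ B :=
          Submodule.sub_mem _ (Submodule.mem_sup_left hxA)
            (Submodule.mem_sup_right (hB'le hb'))
        simpa using this
      have hc0 : c = 0 := Submodule.disjoint_def.mp hC.disjoint c hcAB hc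
      have hb0 : b' = 0 := Submodule.disjoint_def.mp hB'disj b'
        (Submodule.mem_inf.mpr ⟨by simpa [hc0] using hxA, hB'le hb'⟩) hb'
      simp [hb0, hc0]
    · rw [codisjoint_iff, eq_top_iff, ← hC.codisjoint.eq_top]
      exact sup_le (sup_le le_sup_left (hBle.trans (sup_le_sup_left le_sup_left A)))
        (le_sup_of_le_right le_sup_right)
  have h2 : IsCompl B (A' ⊔ C) := by
    constructor
    · rw [Submodule.disjoint_def]
      intro x hxB hx
      rcases Submodule.mem_sup.mp hx with ⟨a', ha', c, hc, rfl⟩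
      have hcAB : c ∈ A ⊔ B := by
        have : (a' + c) - a' ∈ A ⊔ B :=
          Submodule.sub_mem _ (Submodule.mem_sup_right hxB)
            (Submodule.mem_sup_left (hA'le ha'))
        simpa using this
      have hc0 : c = 0 := Submodule.disjoint_def.mp hC.disjoint c hcAB hc
      have ha0 : a' = 0 := Submodule.disjoint_def.mp hA'disj a'
        (Submodule.mem_inf.mpr ⟨hA'le ha', by simpa [hc0] using hxB⟩) ha'
      simp [ha0, hc0]
    · rw [codisjoint_iff, eq_top_iff, ← hC.codisjoint.eq_top]
      exact sup_le (sup_le (hAle.trans (sup_le le_sup_left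
        (le_sup_of_le_right le_sup_left))) le_sup_left)
        (le_sup_of_le_right le_sup_right)
  have h3 : IsCompl (A ⊓ B) (A' ⊔ (B' ⊔ C)) := by
    constructor
    · rw [Submodule.disjoint_def]
      intro x hxD hx
      rcases Submodule.mem_sup.mp hx with ⟨a', ha', y, hy, rfl⟩
      rcases Submodule.mem_sup.mp hy with ⟨b', hb', c, hc, rfl⟩
      have hcAB : c ∈ A ⊔ B := by
        have : (a' + (b' + c)) - a' - b' ∈ A ⊔ B :=
          Submodule.sub_mem _ (Submodule.sub_mem _
            (Submodule.mem_sup_left (Submodule.mem_inf.mp hxD).1)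
            (Submodule.mem_sup_left (hA'le ha')))
            (Submodule.mem_sup_right (hB'le hb'))
        simpa using this
      have hc0 : c = 0 := Submodule.disjoint_def.mp hC.disjoint c hcAB hc
      have hb0 : b' = 0 := by
        refine Submodule.disjoint_def.mp hB'disj b' (Submodule.mem_inf.mpr ⟨?_, hB'le hb'⟩) hb'
        have : (a' + (b' + c)) - a' ∈ A :=
          Submodule.sub_mem _ (Submodule.mem_inf.mp hxD).1 (hA'le ha')
        simpa [hc0] using this
      have ha0 : a' = 0 := by
        refine Submodule.disjoint_def.mp hA'disj a' ?_ ha'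
        simpa [hb0, hc0] using hxD
      simp [ha0, hb0, hc0]
    · rw [codisjoint_iff, eq_top_iff, ← hC.codisjoint.eq_top]
      refine sup_le (sup_le ?_ ?_) (le_sup_of_le_right (le_sup_of_le_right le_sup_right))
      · exact (le_of_eq hA'sup.symm).trans (sup_le_sup_left le_sup_left _)
      · exact (le_of_eq hB'sup.symm).trans
          (sup_le_sup_left (le_sup_of_le_right le_sup_left) _)
  set πA := Submodule.linearProjOfIsCompl A (B' ⊔ C) h1 with hπA
  set πB := Submodule.linearProjOfIsCompl B (A' ⊔ C) h2 with hπB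
  set πD := Submodule.linearProjOfIsCompl (A ⊓ B) (A' ⊔ (B' ⊔ C)) h3 with hπD
  set ωD := ωA.compLinearMap (Submodule.inclusion (inf_le_left : A ⊓ B ≤ A)) with hωD
  have hπB_eq : ∀ x, x ∈ A → ((πB x : V)) = ((πD x : V)) := by
    intro x hx
    rw [← hA'sup] at hx
    rcases Submodule.mem_sup.mp hx with ⟨d, hd, a', ha', rfl⟩
    have e1 : πB d = ⟨d, (Submodule.mem_inf.mp hd).2⟩ :=
      Submodule.linearProjOfIsCompl_apply_left h2 ⟨d, (Submodule.mem_inf.mp hd).2⟩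
    have e2 : πB a' = 0 :=
      Submodule.linearProjOfIsCompl_apply_right' h2 (Submodule.mem_sup_left ha')
    have e3 : πD d = ⟨d, hd⟩ := Submodule.linearProjOfIsCompl_apply_left h3 ⟨d, hd⟩
    have e4 : πD a' = 0 :=
      Submodule.linearProjOfIsCompl_apply_right' h3 (Submodule.mem_sup_left ha')
    simp [map_add, e1, e2, e3, e4]
  have hπA_eq : ∀ x, x ∈ B → ((πA x : V)) = ((πD x : V)) := by
    intro x hx
    rw [← hB'sup] at hx
    rcases Submodule.mem_sup.mp hx with ⟨d, hd, b', hb', rfl⟩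
    have e1 : πA d = ⟨d, (Submodule.mem_inf.mp hd).1⟩ :=
      Submodule.linearProjOfIsCompl_apply_left h1 ⟨d, (Submodule.mem_inf.mp hd).1⟩
    have e2 : πA b' = 0 :=
      Submodule.linearProjOfIsCompl_apply_right' h1 (Submodule.mem_sup_left hb')
    have e3 : πD d = ⟨d, hd⟩ := Submodule.linearProjOfIsCompl_apply_left h3 ⟨d, hd⟩
    have e4 : πD b' = 0 :=
      Submodule.linearProjOfIsCompl_apply_right' h3
        (Submodule.mem_sup_right (Submodule.mem_sup_left hb'))
    simp [map_add, e1, e2, e3, e4]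
  refine ⟨ωA.compLinearMap πA + ωB.compLinearMap πB - ωD.compLinearMap πD, ?_, ?_⟩
  · ext v
    have eB : ωB (fun i => πB ((v i : V))) = ωD (fun i => πD ((v i : V))) := by
      have h' : (fun i => πB ((v i : V))) =
          fun i => Submodule.inclusion (inf_le_right : A ⊓ B ≤ B) (πD ((v i : V))) :=
        funext fun i => Subtype.ext (by
          rw [Submodule.coe_inclusion]; exact hπB_eq _ (v i).2)
      rw [h']
      exact (DFunLike.congr_fun hcompat (fun i => πD ((v i : V)))).symm
    have eA : (fun i => πA ((v i : V))) = v :=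
      funext fun i => Submodule.linearProjOfIsCompl_apply_left h1 (v i)
    simp only [AlternatingMap.compLinearMap_apply, AlternatingMap.sub_apply,
      AlternatingMap.add_apply, Submodule.coe_subtype]
    rw [eA, eB, add_sub_cancel_right]
  · ext v
    have eA : ωA (fun i => πA ((v i : V))) = ωD (fun i => πD ((v i : V))) := by
      have h' : (fun i => πA ((v i : V))) =
          fun i => Submodule.inclusion (inf_le_left : A ⊓ B ≤ A) (πD ((v i : V))) :=
        funext fun i => Subtype.ext (by
          rw [Submodule.coe_inclusion]; exact hπA_eq _ (v i).2)
      rw [h']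
      rfl
    have eB : (fun i => πB ((v i : V))) = v :=
      funext fun i => Submodule.linearProjOfIsCompl_apply_left h2 (v i)
    simp only [AlternatingMap.compLinearMap_apply, AlternatingMap.sub_apply,
      AlternatingMap.add_apply, Submodule.coe_subtype]
    rw [eA, eB, add_sub_cancel_left]

variable {V : Type*} [AddCommGroup V] [Module ℝ V] {p : ℕ}

theorem hasExt_of_pair {ι : Type*} (F : ι → Submodule ℝ V) (a b : ι)
    (hcov : ∀ c, c = a ∨ c = b) : HasExtensionProperty p F := by
  intro ω hcomp
  obtain ⟨Ω, hA, hB⟩ := exists_extension_pair (F a) (F b) (ω a) (ω b) (hcomp a b)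
  exact ⟨Ω, fun c => by rcases hcov c with rfl | rfl <;> assumption⟩

theorem hasExt_of_isEmpty {ι : Type*} [IsEmpty ι] (F : ι → Submodule ℝ V) :
    HasExtensionProperty p F :=
  fun ω _ => ⟨0, fun i => isEmptyElim i⟩

end aux

/-- let `p ≥ 1` and let `E 1, …, E N` be an arrangement of subspaces of `ℝ^n`
such that for every index `i` with at least three larger indices, the collection
`{E j ∩ E i}_{j > i}` has the `p`-extension property inside `E i`.  Then every cocycle
`(R i j)_{i<j}` of alternating `p`-forms on the pairwise intersections (i.e.
`R i j - R i k + R j k = 0` on `⋀^p(E i ∩ E j ∩ E k)` for `i < j < k`) is a coboundary: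
there are `p`-forms `L i` on `E i` with `R i j = L j - L i` on `⋀^p(E i ∩ E j)`. -/
theorem cocycle_is_coboundary {n N : ℕ} (p : ℕ) (hp : 1 ≤ p)
    (E : Fin N → Submodule ℝ (Fin n → ℝ))
    (hext : ∀ i : Fin N, (i : ℕ) + 4 ≤ N →
      HasExtensionProperty p
        (fun j : {j : Fin N // i < j} => (E j.1 ⊓ E i).comap (E i).subtype))
    (R : (i j : Fin N) → AlternatingMap ℝ ↥(E i ⊓ E j) ℝ (Fin p))
    (hR : ∀ i j k : Fin N, i < j → j < k →
      (R i j).compLinearMap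
          (Submodule.inclusion (inf_le_left : E i ⊓ E j ⊓ E k ≤ E i ⊓ E j)) -
        (R i k).compLinearMap
          (Submodule.inclusion (le_inf (le_trans inf_le_left inf_le_left) inf_le_right :
            E i ⊓ E j ⊓ E k ≤ E i ⊓ E k)) +
        (R j k).compLinearMap
          (Submodule.inclusion (le_inf (le_trans inf_le_left inf_le_right) inf_le_right :
            E i ⊓ E j ⊓ E k ≤ E j ⊓ E k)) = 0) :
    ∃ L : (i : Fin N) → AlternatingMap ℝ ↥(E i) ℝ (Fin p),
      ∀ i j : Fin N, i < j →
        R i j =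
          (L j).compLinearMap (Submodule.inclusion (inf_le_right : E i ⊓ E j ≤ E j)) -
            (L i).compLinearMap (Submodule.inclusion (inf_le_left : E i ⊓ E j ≤ E i)) := by
  have hcoc : ∀ (i j k : Fin N), i < j → j < k → ∀ (w : Fin p → (Fin n → ℝ))
      (h1 : ∀ t, w t ∈ E i) (h2 : ∀ t, w t ∈ E j) (h3 : ∀ t, w t ∈ E k),
      evalv (R i j) w (fun t => Submodule.mem_inf.mpr ⟨h1 t, h2 t⟩) -
        evalv (R i k) w (fun t => Submodule.mem_inf.mpr ⟨h1 t, h3 t⟩) +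
        evalv (R j k) w (fun t => Submodule.mem_inf.mpr ⟨h2 t, h3 t⟩) = 0 := by
    intro i j k hij hjk w h1 h2 h3
    have h := DFunLike.congr_fun (hR i j k hij hjk)
      (fun t => (⟨w t, Submodule.mem_inf.mpr
        ⟨Submodule.mem_inf.mpr ⟨h1 t, h2 t⟩, h3 t⟩⟩ : ↥(E i ⊓ E j ⊓ E k)))
    exact h
  suffices hmain : ∀ m : ℕ, ∃ L : (i : Fin N) → AlternatingMap ℝ ↥(E i) ℝ (Fin p),
      ∀ i j : Fin N, i < j → N ≤ (i : ℕ) + m →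
        R i j =
          (L j).compLinearMap (Submodule.inclusion (inf_le_right : E i ⊓ E j ≤ E j)) -
            (L i).compLinearMap (Submodule.inclusion (inf_le_left : E i ⊓ E j ≤ E i)) by
    obtain ⟨L, hL⟩ := hmain N
    exact ⟨L, fun i j hij => hL i j hij (by omega)⟩
  intro m
  induction m with
  | zero =>
    exact ⟨fun _ => 0, fun i j hij him => absurd him (by have := i.isLt; omega)⟩
  | succ m ih =>
    obtain ⟨L, hL⟩ := ih
    by_cases hm : N ≤ m
    · exact ⟨L, fun i j hij him => hL i j hij (by omega)⟩
    -- `L` in `evalv` form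
    have hLev : ∀ (j k : Fin N), j < k → N ≤ (j : ℕ) + m →
        ∀ (w : Fin p → (Fin n → ℝ)) (h2 : ∀ t, w t ∈ E j) (h3 : ∀ t, w t ∈ E k),
        evalv (R j k) w (fun t => Submodule.mem_inf.mpr ⟨h2 t, h3 t⟩) =
          evalv (L k) w h3 - evalv (L j) w h2 := by
      intro j k hjk hcond w h2 h3
      have h := DFunLike.congr_fun (hL j k hjk hcond)
        (fun t => (⟨w t, Submodule.mem_inf.mpr ⟨h2 t, h3 t⟩⟩ : ↥(E j ⊓ E k)))
      exact h
    set i₀ : Fin N := ⟨N - m - 1, by omega⟩ with hi₀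
    have hi₀val : (i₀ : ℕ) = N - m - 1 := rfl
    -- the fan of subspaces at `i₀`
    set F : {j : Fin N // i₀ < j} → Submodule ℝ ↥(E i₀) :=
      (fun j => (E j.1 ⊓ E i₀).comap (E i₀).subtype) with hF
    have hasext : HasExtensionProperty p F := by
      by_cases h4 : (i₀ : ℕ) + 4 ≤ N
      · exact hext i₀ h4
      · rcases Nat.eq_zero_or_pos m with rfl | hmpos
        · haveI : IsEmpty {j : Fin N // i₀ < j} := by
            refine ⟨fun j => ?_⟩
            have h1 : (i₀ : ℕ) < (j.1 : ℕ) := j.2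
            have := j.1.isLt
            omega
          exact hasExt_of_isEmpty F
        · refine hasExt_of_pair F ⟨⟨N - m, by omega⟩, by
              simp only [Fin.lt_def]; omega⟩ ⟨⟨N - 1, by omega⟩, by
              simp only [Fin.lt_def]; omega⟩ ?_
          intro c
          have h1 : (i₀ : ℕ) < (c.1 : ℕ) := c.2
          have h2 := c.1.isLt
          have : (c.1 : ℕ) = N - m ∨ (c.1 : ℕ) = N - 1 := by omega
          rcases this with h | h
          · exact Or.inl (Subtype.ext (Fin.ext h))
          · exact Or.inr (Subtype.ext (Fin.ext h))
    -- membership facts for the fan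
    have memi₀ : ∀ (j : {j : Fin N // i₀ < j}) (x : ↥(F j)),
        ((x : ↥(E i₀)) : Fin n → ℝ) ∈ E i₀ := fun j x => (x : ↥(E i₀)).2
    have memj : ∀ (j : {j : Fin N // i₀ < j}) (x : ↥(F j)),
        ((x : ↥(E i₀)) : Fin n → ℝ) ∈ E j.1 := fun j x =>
      (Submodule.mem_inf.mp (Submodule.mem_comap.mp x.2)).1
    -- the compatible family of forms on the fan
    set ω : (j : {j : Fin N // i₀ < j}) → AlternatingMap ℝ ↥(F j) ℝ (Fin p) :=
      (fun j =>
        (L j.1).compLinearMap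
          (LinearMap.codRestrict (E j.1) ((E i₀).subtype.comp (F j).subtype) (memj j)) -
        (R i₀ j.1).compLinearMap
          (LinearMap.codRestrict (E i₀ ⊓ E j.1) ((E i₀).subtype.comp (F j).subtype)
            (fun x => Submodule.mem_inf.mpr ⟨memi₀ j x, memj j x⟩))) with hω
    have hωapp : ∀ (j : {j : Fin N // i₀ < j}) (u : Fin p → ↥(F j))
        (w : Fin p → (Fin n → ℝ)) (hw : ∀ t, ((u t : ↥(E i₀)) : Fin n → ℝ) = w t)
        (h0 : ∀ t, w t ∈ E i₀) (hj : ∀ t, w t ∈ E j.1),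
        ω j u = evalv (L j.1) w hj -
          evalv (R i₀ j.1) w (fun t => Submodule.mem_inf.mpr ⟨h0 t, hj t⟩) := by
      intro j u w hw h0 hj
      have hwe : w = fun t => ((u t : ↥(E i₀)) : Fin n → ℝ) := funext fun t => (hw t).symm
      subst hwe
      rfl
    have hcompat : ∀ j k, (ω j).compLinearMap
          (Submodule.inclusion (inf_le_left : F j ⊓ F k ≤ F j)) =
        (ω k).compLinearMap (Submodule.inclusion (inf_le_right : F j ⊓ F k ≤ F k)) := by
      intro j k
      ext v
      set w : Fin p → (Fin n → ℝ) := fun t => (((v t : ↥(F j ⊓ F k)) : ↥(E i₀)) : Fin n → ℝ)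
        with hw
      have h0 : ∀ t, w t ∈ E i₀ := fun t => ((v t : ↥(F j ⊓ F k)) : ↥(E i₀)).2
      have hwj : ∀ t, w t ∈ E j.1 := fun t =>
        (Submodule.mem_inf.mp (Submodule.mem_comap.mp
          (Submodule.mem_inf.mp (v t).2).1)).1
      have hwk : ∀ t, w t ∈ E k.1 := fun t =>
        (Submodule.mem_inf.mp (Submodule.mem_comap.mp
          (Submodule.mem_inf.mp (v t).2).2)).1
      have eL : ((ω j).compLinearMap
            (Submodule.inclusion (inf_le_left : F j ⊓ F k ≤ F j))) v =
          evalv (L j.1) w hwj -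
            evalv (R i₀ j.1) w (fun t => Submodule.mem_inf.mpr ⟨h0 t, hwj t⟩) :=
        hωapp j _ w (fun t => rfl) h0 hwj
      have eR : ((ω k).compLinearMap
            (Submodule.inclusion (inf_le_right : F j ⊓ F k ≤ F k))) v =
          evalv (L k.1) w hwk -
            evalv (R i₀ k.1) w (fun t => Submodule.mem_inf.mpr ⟨h0 t, hwk t⟩) :=
        hωapp k _ w (fun t => rfl) h0 hwk
      rw [eL, eR]
      rcases lt_trichotomy j.1 k.1 with hlt | heq | hgt
      · have hj' : (i₀ : ℕ) < (j.1 : ℕ) := j.2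
        have hc := hcoc i₀ j.1 k.1 j.2 hlt w h0 hwj hwk
        have hl := hLev j.1 k.1 hlt (by omega) w hwj hwk
        linarith
      · have hjk : j = k := Subtype.ext heq
        subst hjk
        rfl
      · have hk' : (i₀ : ℕ) < (k.1 : ℕ) := k.2
        have hc := hcoc i₀ k.1 j.1 k.2 hgt w h0 hwk hwj
        have hl := hLev k.1 j.1 hgt (by omega) w hwk hwj
        linarith
    obtain ⟨Ω, hΩ⟩ := hasext ω hcompat
    refine ⟨Function.update L i₀ Ω, ?_⟩
    intro i j hij hcond
    have hijv : (i : ℕ) < (j : ℕ) := hij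
    have hjne : j ≠ i₀ := by
      intro h
      have : (j : ℕ) = (i₀ : ℕ) := congrArg Fin.val h
      omega
    rw [Function.update_of_ne hjne]
    by_cases hii : i = i₀
    · subst hii
      rw [Function.update_self]
      ext v
      set w : Fin p → (Fin n → ℝ) := fun t => ((v t : ↥(E i₀ ⊓ E j)) : Fin n → ℝ) with hw
      have h0 : ∀ t, w t ∈ E i₀ := fun t => (Submodule.mem_inf.mp (v t).2).1
      have hwj : ∀ t, w t ∈ E j := fun t => (Submodule.mem_inf.mp (v t).2).2
      set u : Fin p → ↥(F (⟨j, hij⟩ : {j' : Fin N // i₀ < j'})) :=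
        fun t => ⟨⟨w t, h0 t⟩, Submodule.mem_comap.mpr
          (Submodule.mem_inf.mpr ⟨hwj t, h0 t⟩)⟩ with hu
      have h1 : Ω (fun t => (⟨w t, h0 t⟩ : ↥(E i₀))) = ω ⟨j, hij⟩ u :=
        DFunLike.congr_fun (hΩ ⟨j, hij⟩) u
      have h2 : ω ⟨j, hij⟩ u =
          evalv (L j) w hwj -
            evalv (R i₀ j) w (fun t => Submodule.mem_inf.mpr ⟨h0 t, hwj t⟩) :=
        hωapp ⟨j, hij⟩ u w (fun t => rfl) h0 hwj
      show evalv (R i₀ j) w (fun t => Submodule.mem_inf.mpr ⟨h0 t, hwj t⟩) =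
        evalv (L j) w hwj - Ω (fun t => (⟨w t, h0 t⟩ : ↥(E i₀)))
      linarith
    · rw [Function.update_of_ne hii]
      have : (i : ℕ) ≠ (i₀ : ℕ) := fun h => hii (Fin.ext h)
      exact hL i j hij (by omega)
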